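/- Let (ι, A, I, z, x) be a GI datum and (ι', A, I, z', x') a Kramers–Wannier dual datum for it. Then the symmetric sector L₀ is invariant under all the operators Z_{z α} and X_{x i}, the dual symmetric sector L₀' is invariant under all the operators Z_{z' α} and X_{x' i}, and there exists a ℂ-linear, inner-product-preserving isomorphism f : L₀ → L₀' such that f(Z_{z α} ψ) = Z_{z' α} f(ψ) for all α ∈ A and ψ ∈ L₀, and f(X_{x i} ψ) = X_{x' i} f(ψ) for all i ∈ I and ψ ∈ L₀. -/

import Mathlib

noncomputable section

/-- The `ZMod 2`-valued dot product `u·v = ∑ j, u j * v j`. -/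
def dotp {ι : Type} [Fintype ι] (u v : ι → ZMod 2) : ZMod 2 := ∑ j, u j * v j

/-- The X-type Pauli operator `X_u`: the permutation matrix with
`(X_u)_{s,t} = 1` iff `s = t + u`. -/
def Xop {ι : Type} [Fintype ι] (u : ι → ZMod 2) :
    Matrix (ι → ZMod 2) (ι → ZMod 2) ℂ :=
  Matrix.of fun s t => if s = t + u then 1 else 0

/-- The Z-type Pauli operator `Z_v`: the diagonal matrix with
`(Z_v)_{s,s} = (-1)^(v·s)`. -/
def Zop {ι : Type} [Fintype ι] (v : ι → ZMod 2) :
    Matrix (ι → ZMod 2) (ι → ZMod 2) ℂ :=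
  Matrix.of fun s t => if s = t then (-1 : ℂ) ^ (dotp v s).val else 0

/-- The standard inner product on the `ι`-qubit Hilbert space `(ι → ZMod 2) → ℂ`. -/
def qInner {ι : Type} [Fintype ι] [DecidableEq ι] (ψ φ : (ι → ZMod 2) → ℂ) : ℂ :=
  ∑ s, (starRingEnd ℂ) (ψ s) * φ s

/-- The subspace of vectors fixed by every operator in a given set of matrices. -/
def fixedSpace {ι : Type} [Fintype ι] [DecidableEq ι]
    (Ms : Set (Matrix (ι → ZMod 2) (ι → ZMod 2) ℂ)) :
    Submodule ℂ ((ι → ZMod 2) → ℂ) :=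
  ⨅ M ∈ Ms, LinearMap.ker (Matrix.mulVecLin M - LinearMap.id)
/-- The symmetric sector `L₀` of a GI datum `(ι, A, I, z, x)`: vectors fixed by every
Z-type symmetry `Z_v` (`v·(x i) = 0` for all `i`) and every compatible X-type symmetry
`X_u` (`u·(z α) = 0` for all `α`, and `u·v = 0` for every `v` with `v·(x i) = 0` for all `i`). -/
def giL0 (ι A I : Type) [Fintype ι] [DecidableEq ι] [Fintype A] [Fintype I]
    (z : A → ι → ZMod 2) (x : I → ι → ZMod 2) : Submodule ℂ ((ι → ZMod 2) → ℂ) :=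
  fixedSpace
    ({M | ∃ v : ι → ZMod 2, (∀ i, dotp v (x i) = 0) ∧ M = Zop v} ∪
     {M | ∃ u : ι → ZMod 2, (∀ α, dotp u (z α) = 0) ∧
        (∀ v : ι → ZMod 2, (∀ i, dotp v (x i) = 0) → dotp u v = 0) ∧ M = Xop u})

/-- The dual symmetric sector `L₀'` of a dual datum `(ι', A, I, z', x')`: vectors fixed
by every X-type symmetry `X_{u'}` (`u'·(z' α) = 0` for all `α`) and every compatible
Z-type symmetry `Z_{v'}` (`v'` in the span of the `z' α` and `v'·(x' i) = 0` for all `i`). -/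
def dualL0 (ι' A I : Type) [Fintype ι'] [DecidableEq ι'] [Fintype A] [Fintype I]
    (z' : A → ι' → ZMod 2) (x' : I → ι' → ZMod 2) : Submodule ℂ ((ι' → ZMod 2) → ℂ) :=
  fixedSpace
    ({M | ∃ u' : ι' → ZMod 2, (∀ α, dotp u' (z' α) = 0) ∧ M = Xop u'} ∪
     {M | ∃ v' : ι' → ZMod 2, v' ∈ Submodule.span (ZMod 2) (Set.range z') ∧
        (∀ i, dotp v' (x' i) = 0) ∧ M = Zop v'})

/-! Let `ζ s = (z α · s)_α` be the syndrome map. A vector of `L₀` is a function of `ζ s`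
supported on `span x` (the `Z`-symmetries cut the support down to the double annihilator of the
`x i`), and a vector of `L₀'` is a function of `ζ' s'` supported on `ζ'⁻¹ M`, where
`M = span (ζ' ∘ x') = ζ (span x)` by the duality relation. So both sectors are ranges of
normalized pullbacks `P, P'` out of `ℓ²(A → 𝔽₂)` whose Gram matrices are the same projection onto
`ℓ²(M)` (all fibres of `ζ` over `M` have `|span x ⊓ ker ζ|` points), and `P' Pᴴ` maps `P g` to
`P' g` isometrically. The local terms act on `ℓ²(A → 𝔽₂)` as `Z_{e_α}` and
`X_{ζ (x i)} = X_{ζ' (x' i)}`, which gives the invariance and the intertwining. -/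

open Matrix Submodule Finset

lemma dotp_eq_dotProduct {ι : Type} [Fintype ι] (u v : ι → ZMod 2) : dotp u v = u ⬝ᵥ v := rfl

lemma qInner_eq_dotProduct {ι : Type} [Fintype ι] [DecidableEq ι] (ψ φ : (ι → ZMod 2) → ℂ) :
    qInner ψ φ = star ψ ⬝ᵥ φ := rfl

lemma sub_eq_add_zmod_two {κ : Type} (a b : κ → ZMod 2) : a - b = a + b := by
  rw [sub_eq_add_neg, show -b = b from funext fun j => ZMod.neg_eq_self_mod_two (b j)]

theorem mem_span_range_iff_forall_dotProduct {K n ι : Type*} [Field K] [Fintype n]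
    [DecidableEq n] (x : ι → n → K) (s : n → K) :
    s ∈ span K (Set.range x) ↔ ∀ v, (∀ i, v ⬝ᵥ x i = 0) → v ⬝ᵥ s = 0 := by
  rw [← Subspace.forall_mem_dualAnnihilator_apply_eq_zero_iff,
    (dotProductEquiv K n).surjective.forall]
  refine forall_congr' fun v => imp_congr ?_ Iff.rfl
  rw [← SetLike.mem_coe, coe_dualAnnihilator_span]
  simp [Set.range_subset_iff]

section Intertwining

variable {n n' m : Type} [Fintype n] [Fintype n'] [Fintype m]

theorem mulVec_mem_range_of_mul_eq {P : Matrix n m ℂ} {M : Matrix n n ℂ} {N : Matrix m m ℂ}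
    (h : M * P = P * N) {ψ : n → ℂ} (hψ : ψ ∈ LinearMap.range P.mulVecLin) :
    M *ᵥ ψ ∈ LinearMap.range P.mulVecLin := by
  obtain ⟨g, rfl⟩ := hψ
  exact ⟨N *ᵥ g, by simp only [mulVecLin_apply, mulVec_mulVec, h]⟩

theorem mulVec_comm_of_intertwining {P : Matrix n m ℂ} {P' : Matrix n' m ℂ}
    {F : Matrix n' n ℂ} {M : Matrix n n ℂ} {M' : Matrix n' n' ℂ} {N : Matrix m m ℂ}
    (hF : F * P = P') (h : M * P = P * N) (h' : M' * P' = P' * N) (g : m → ℂ) :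
    F *ᵥ (M *ᵥ (P *ᵥ g)) = M' *ᵥ (F *ᵥ (P *ᵥ g)) := by
  simp only [mulVec_mulVec, h, ← Matrix.mul_assoc F, hF, h']

theorem star_mulVec_dotProduct_mulVec (P : Matrix n m ℂ) (g h : m → ℂ) :
    star (P *ᵥ g) ⬝ᵥ (P *ᵥ h) = star g ⬝ᵥ ((Pᴴ * P) *ᵥ h) := by
  rw [star_mulVec, ← dotProduct_mulVec, mulVec_mulVec]

end Intertwining

section Pauli

variable {ι : Type} [Fintype ι] [DecidableEq ι]

omit [DecidableEq ι] in
lemma Zop_eq_diagonal (v : ι → ZMod 2) :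
    Zop v = diagonal fun s => (-1 : ℂ) ^ (dotp v s).val := by
  ext s t
  simp [Zop, diagonal_apply]

omit [DecidableEq ι] in
lemma Xop_apply (u s t : ι → ZMod 2) : Xop u s t = if t = s + u then 1 else 0 := by
  refine if_congr ?_ rfl rfl
  rw [← sub_eq_iff_eq_add, sub_eq_add_zmod_two, eq_comm]

lemma Xop_mul_apply {n : Type} (u : ι → ZMod 2) (M : Matrix (ι → ZMod 2) n ℂ)
    (s : ι → ZMod 2) (m : n) : (Xop u * M) s m = M (s + u) m := by
  simp [mul_apply, Xop_apply]

lemma mul_Xop_apply {n : Type} (u : ι → ZMod 2) (M : Matrix n (ι → ZMod 2) ℂ)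
    (r : n) (t : ι → ZMod 2) : (M * Xop u) r t = M r (t + u) := by
  simp [mul_apply, Xop]

lemma Xop_mulVec_apply (u : ι → ZMod 2) (ψ : (ι → ZMod 2) → ℂ) (s : ι → ZMod 2) :
    (Xop u *ᵥ ψ) s = ψ (s + u) := by
  simp [mulVec, dotProduct, Xop_apply]

lemma Xop_mulVec_eq_self_iff (u : ι → ZMod 2) (ψ : (ι → ZMod 2) → ℂ) :
    Xop u *ᵥ ψ = ψ ↔ ∀ s, ψ (s + u) = ψ s := by
  simp only [funext_iff, Xop_mulVec_apply]

lemma Zop_mulVec_eq_self_iff (v : ι → ZMod 2) (ψ : (ι → ZMod 2) → ℂ) :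
    Zop v *ᵥ ψ = ψ ↔ ∀ s, dotp v s ≠ 0 → ψ s = 0 := by
  rw [Zop_eq_diagonal, funext_iff]
  refine forall_congr' fun s => ?_
  rw [mulVec_diagonal]
  rcases (by decide : ∀ a : ZMod 2, a = 0 ∨ a = 1) (dotp v s) with h | h <;>
    simp [h, ZMod.val_one, _root_.neg_eq_self]

end Pauli

section Pullback

variable {ι κ : Type} [Fintype ι] [DecidableEq ι] [Fintype κ] [DecidableEq κ]
  (ζ : (ι → ZMod 2) →ₗ[ZMod 2] (κ → ZMod 2)) (X : Submodule (ZMod 2) (ι → ZMod 2))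

omit [DecidableEq κ] in
open Classical in
theorem card_filter_mem_and_eq (m : κ → ZMod 2) :
    #{s | s ∈ X ∧ ζ s = m} = if m ∈ X.map ζ then Nat.card ↥(X ⊓ LinearMap.ker ζ) else 0 := by
  split_ifs with hm
  · obtain ⟨s₀, hs₀, rfl⟩ := hm
    rw [Nat.card_eq_fintype_card, Fintype.card_subtype]
    refine card_equiv (Equiv.subRight s₀) fun s => ?_
    simp [Submodule.sub_mem_iff_left _ hs₀, sub_eq_zero]
  · rw [card_eq_zero, filter_eq_empty_iff]
    rintro s - ⟨hs, rfl⟩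
    exact hm (mem_map_of_mem hs)

open Classical in
noncomputable def pullbackMatrix : Matrix (ι → ZMod 2) (κ → ZMod 2) ℂ :=
  of fun s m => if s ∈ X ∧ ζ s = m then ((√(Nat.card ↥(X ⊓ LinearMap.ker ζ)))⁻¹ : ℝ) else 0

omit [DecidableEq κ] in
theorem conjTranspose_pullbackMatrix_mul_self :
    (pullbackMatrix ζ X)ᴴ * pullbackMatrix ζ X =
      diagonal ((X.map ζ : Set (κ → ZMod 2)).indicator (1 : (κ → ZMod 2) → ℂ)) := by
  classical
  refine Matrix.ext fun m m' => ?_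
  rw [mul_apply, diagonal_apply]
  split_ifs with hmm'
  · subst hmm'
    simp only [pullbackMatrix, conjTranspose_apply, of_apply, apply_ite star, star_zero,
      Complex.star_def, Complex.conj_ofReal, ite_zero_mul_ite_zero, and_self, sum_ite,
      sum_const_zero, add_zero, sum_const, nsmul_eq_mul, card_filter_mem_and_eq]
    have hN : Nat.card ↥(X ⊓ LinearMap.ker ζ) ≠ 0 := Nat.card_pos.ne'
    by_cases hm : m ∈ X.map ζ
    · rw [if_pos hm, Set.indicator_of_mem (SetLike.mem_coe.mpr hm), ← Complex.ofReal_mul,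
        ← mul_inv, Real.mul_self_sqrt (Nat.cast_nonneg _)]
      push_cast
      exact mul_inv_cancel₀ (Nat.cast_ne_zero.mpr hN)
    · rw [if_neg hm, Set.indicator_of_notMem (mt SetLike.mem_coe.mp hm), Nat.cast_zero,
        zero_mul]
  · refine sum_eq_zero fun s _ => ?_
    simp only [pullbackMatrix, conjTranspose_apply, of_apply]
    by_cases h : s ∈ X ∧ ζ s = m
    · rw [if_neg (show ¬(s ∈ X ∧ ζ s = m') from fun h' => hmm' (h.2.symm.trans h'.2)),
        mul_zero]
    · rw [if_neg h, star_zero, zero_mul]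

theorem pullbackMatrix_mul_conjTranspose_mul_self :
    pullbackMatrix ζ X * ((pullbackMatrix ζ X)ᴴ * pullbackMatrix ζ X) = pullbackMatrix ζ X := by
  classical
  rw [conjTranspose_pullbackMatrix_mul_self]
  refine Matrix.ext fun s m => ?_
  rw [mul_diagonal, pullbackMatrix, of_apply]
  split_ifs with h
  · rw [← h.2, Set.indicator_of_mem (mem_map_of_mem h.1), Pi.one_apply, mul_one]
  · rw [zero_mul]

theorem Zop_mul_pullbackMatrix {v : ι → ZMod 2} {w : κ → ZMod 2}
    (hvw : ∀ s, dotp v s = dotp w (ζ s)) :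
    Zop v * pullbackMatrix ζ X = pullbackMatrix ζ X * Zop w := by
  classical
  refine Matrix.ext fun s m => ?_
  rw [Zop_eq_diagonal, Zop_eq_diagonal, diagonal_mul, mul_diagonal, pullbackMatrix, of_apply]
  split_ifs with h
  · rw [hvw, h.2, mul_comm]
  · rw [zero_mul, mul_zero]

theorem Xop_mul_pullbackMatrix {u : ι → ZMod 2} (hu : u ∈ X) :
    Xop u * pullbackMatrix ζ X = pullbackMatrix ζ X * Xop (ζ u) := by
  classical
  refine Matrix.ext fun s m => ?_
  simp only [Xop_mul_apply, mul_Xop_apply, pullbackMatrix, of_apply, X.add_mem_iff_left hu,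
    map_add, ← eq_sub_iff_add_eq, sub_eq_add_zmod_two]

open Classical in
theorem pullbackMatrix_mulVec_apply (g : (κ → ZMod 2) → ℂ) (s : ι → ZMod 2) :
    (pullbackMatrix ζ X *ᵥ g) s =
      if s ∈ X then (((√(Nat.card ↥(X ⊓ LinearMap.ker ζ)))⁻¹ : ℝ) : ℂ) * g (ζ s) else 0 := by
  simp [pullbackMatrix, mulVec, dotProduct, ite_and]

theorem mem_range_pullbackMatrix_iff (ψ : (ι → ZMod 2) → ℂ) :
    ψ ∈ LinearMap.range (pullbackMatrix ζ X).mulVecLin ↔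
      (∀ s ∉ X, ψ s = 0) ∧ ∀ u ∈ X, ζ u = 0 → ∀ s, ψ (s + u) = ψ s := by
  classical
  constructor
  · rintro ⟨g, rfl⟩
    refine ⟨fun s hs => by simp [pullbackMatrix_mulVec_apply, hs], fun u hu hζu s => ?_⟩
    simp [pullbackMatrix_mulVec_apply, X.add_mem_iff_left hu, hζu]
  · rintro ⟨hout, hinv⟩
    have hfac : (fun s : X => ψ s).FactorsThrough (fun s : X => ζ s) := by
      intro s t hst
      have := hinv (t - s) (X.sub_mem t.2 s.2) (by rw [map_sub, sub_eq_zero]; exact hst.symm) s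
      rw [add_sub_cancel] at this
      exact this.symm
    have hc : (((√(Nat.card ↥(X ⊓ LinearMap.ker ζ)))⁻¹ : ℝ) : ℂ) ≠ 0 := by
      have : 0 < Nat.card ↥(X ⊓ LinearMap.ker ζ) := Nat.card_pos
      simp only [ne_eq, Complex.ofReal_eq_zero, inv_eq_zero, Real.sqrt_eq_zero', not_le]
      exact_mod_cast this
    refine ⟨(((√(Nat.card ↥(X ⊓ LinearMap.ker ζ)))⁻¹ : ℝ) : ℂ)⁻¹ •
      Function.extend (fun s : X => ζ s) (fun s : X => ψ s) 0, funext fun s => ?_⟩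
    rw [mulVecLin_apply, pullbackMatrix_mulVec_apply]
    split_ifs with hs
    · rw [Pi.smul_apply, hfac.extend_apply _ ⟨s, hs⟩, smul_eq_mul, mul_inv_cancel_left₀ hc]
    · exact (hout s hs).symm

end Pullback

section Sectors

variable {ι A I : Type} [Fintype ι]

def syndrome (z : A → ι → ZMod 2) : (ι → ZMod 2) →ₗ[ZMod 2] (A → ZMod 2) :=
  (Matrix.of z).mulVecLin

lemma syndrome_apply (z : A → ι → ZMod 2) (s : ι → ZMod 2) (α : A) :
    syndrome z s α = dotp (z α) s := rfl

lemma syndrome_eq_zero_iff (z : A → ι → ZMod 2) (u : ι → ZMod 2) :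
    syndrome z u = 0 ↔ ∀ α, dotp u (z α) = 0 := by
  simp only [funext_iff, syndrome_apply, Pi.zero_apply, dotp, mul_comm]

lemma dotp_single_syndrome [Fintype A] [DecidableEq A] (z : A → ι → ZMod 2) (α : A)
    (s : ι → ZMod 2) : dotp (Pi.single α 1) (syndrome z s) = dotp (z α) s := by
  rw [dotp, ← dotProduct, single_dotProduct, one_mul, syndrome_apply]

lemma sum_smul_dotProduct [Fintype A] (z : A → ι → ZMod 2) (a : A → ZMod 2)
    (s : ι → ZMod 2) : (∑ α, a α • z α) ⬝ᵥ s = a ⬝ᵥ syndrome z s := by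
  rw [show ∑ α, a α • z α = a ᵥ* Matrix.of z from (vecMul_eq_sum _ _).symm,
    ← dotProduct_mulVec]
  rfl

theorem Zop_mul_pullbackMatrix_syndrome [DecidableEq ι] [Fintype A] [DecidableEq A]
    (z : A → ι → ZMod 2) (Y : Submodule (ZMod 2) (ι → ZMod 2)) (α : A) :
    Zop (z α) * pullbackMatrix (syndrome z) Y =
      pullbackMatrix (syndrome z) Y * Zop (Pi.single α 1) :=
  Zop_mul_pullbackMatrix _ _ fun s => (dotp_single_syndrome z α s).symm

lemma mem_fixedSpace_iff [DecidableEq ι] (Ms : Set (Matrix (ι → ZMod 2) (ι → ZMod 2) ℂ))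
    (ψ : (ι → ZMod 2) → ℂ) : ψ ∈ fixedSpace Ms ↔ ∀ M ∈ Ms, M *ᵥ ψ = ψ := by
  simp only [fixedSpace, Submodule.mem_iInf, LinearMap.mem_ker, LinearMap.sub_apply,
    Matrix.mulVecLin_apply, LinearMap.id_apply, sub_eq_zero]

theorem mem_giL0_iff [DecidableEq ι] [Fintype A] [DecidableEq A] [Fintype I]
    (z : A → ι → ZMod 2) (x : I → ι → ZMod 2) (ψ : (ι → ZMod 2) → ℂ) :
    ψ ∈ giL0 ι A I z x ↔ ψ ∈
      LinearMap.range (pullbackMatrix (syndrome z) (span (ZMod 2) (Set.range x))).mulVecLin := by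
  rw [mem_range_pullbackMatrix_iff, giL0, mem_fixedSpace_iff]
  simp only [Set.mem_union, Set.mem_ofPred_eq, or_imp, forall_and, forall_exists_index, and_imp]
  simp only [forall_comm (α := Matrix (ι → ZMod 2) (ι → ZMod 2) ℂ), forall_eq,
    Zop_mulVec_eq_self_iff, Xop_mulVec_eq_self_iff, syndrome_eq_zero_iff,
    mem_span_range_iff_forall_dotProduct, dotp_eq_dotProduct]
  refine and_congr ⟨fun h s hs => ?_, fun h v hv s hvs => h s fun hs => hvs (hs v hv)⟩
    (forall_congr' fun u => ⟨fun h hu hζ => h hζ fun v hv => ?_, fun h hζ hu => h ?_ hζ⟩)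
  · push Not at hs
    obtain ⟨v, hv, hvs⟩ := hs
    exact h v hv s hvs
  · rw [dotProduct_comm]
    exact hu v hv
  · intro v hv
    rw [dotProduct_comm]
    exact hu v hv

theorem mem_dualL0_iff [DecidableEq ι] [Fintype A] [DecidableEq A] [Fintype I]
    (z' : A → ι → ZMod 2) (x' : I → ι → ZMod 2) (φ : (ι → ZMod 2) → ℂ) :
    φ ∈ dualL0 ι A I z' x' ↔ φ ∈ LinearMap.range (pullbackMatrix (syndrome z')
      ((span (ZMod 2) (Set.range (syndrome z' ∘ x'))).comap (syndrome z'))).mulVecLin := by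
  rw [mem_range_pullbackMatrix_iff, dualL0, mem_fixedSpace_iff]
  simp only [Set.mem_union, Set.mem_ofPred_eq, or_imp, forall_and, forall_exists_index, and_imp]
  simp only [forall_comm (α := Matrix (ι → ZMod 2) (ι → ZMod 2) ℂ), forall_eq,
    Zop_mulVec_eq_self_iff, Xop_mulVec_eq_self_iff, mem_comap]
  rw [and_comm]
  refine and_congr ⟨fun h s hs => ?_, fun h v' hv' hvx s hvs => ?_⟩ (forall_congr' fun u => ?_)
  · rw [mem_span_range_iff_forall_dotProduct] at hs
    push Not at hs
    obtain ⟨a, ha, has⟩ := hs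
    refine h (∑ α, a α • z' α) (sum_mem fun α _ => smul_mem _ _ (subset_span ⟨α, rfl⟩))
      (fun i => ?_) s ?_
    · rw [dotp_eq_dotProduct, sum_smul_dotProduct]
      exact ha i
    · rwa [dotp_eq_dotProduct, sum_smul_dotProduct]
  · obtain ⟨a, rfl⟩ := (mem_span_range_iff_exists_fun _).1 hv'
    refine h s fun hs => hvs ?_
    rw [dotp_eq_dotProduct, sum_smul_dotProduct]
    refine (mem_span_range_iff_forall_dotProduct _ _).1 hs a fun i => ?_
    rw [Function.comp_apply, ← sum_smul_dotProduct]
    exact hvx i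
  · rw [syndrome_eq_zero_iff]
    refine ⟨fun h _ hu => h hu, fun h hu => h ?_ hu⟩
    rw [(syndrome_eq_zero_iff z' u).2 hu]
    exact zero_mem _

end Sectors

/-- for a GI datum and a Kramers–Wannier dual datum, the symmetric
sectors are invariant under the respective Hamiltonian local terms, and there is a
ℂ-linear inner-product-preserving isomorphism `L₀ ≅ L₀'` intertwining `Z_{z α}` with
`Z_{z' α}` and `X_{x i}` with `X_{x' i}`. -/
theorem statement10 (ι ι' A I : Type)
    [Fintype ι] [DecidableEq ι] [Fintype ι'] [DecidableEq ι'] [Fintype A] [Fintype I]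
    (z : A → ι → ZMod 2) (x : I → ι → ZMod 2)
    (z' : A → ι' → ZMod 2) (x' : I → ι' → ZMod 2)
    (hdual : ∀ (α : A) (i : I), dotp (z α) (x i) = dotp (z' α) (x' i)) :
    (∀ α, ∀ ψ ∈ giL0 ι A I z x, (Zop (z α)).mulVec ψ ∈ giL0 ι A I z x) ∧
    (∀ i, ∀ ψ ∈ giL0 ι A I z x, (Xop (x i)).mulVec ψ ∈ giL0 ι A I z x) ∧
    (∀ α, ∀ φ ∈ dualL0 ι' A I z' x', (Zop (z' α)).mulVec φ ∈ dualL0 ι' A I z' x') ∧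
    (∀ i, ∀ φ ∈ dualL0 ι' A I z' x', (Xop (x' i)).mulVec φ ∈ dualL0 ι' A I z' x') ∧
    ∃ f : ((ι → ZMod 2) → ℂ) →ₗ[ℂ] ((ι' → ZMod 2) → ℂ),
      (∀ ψ ∈ giL0 ι A I z x, f ψ ∈ dualL0 ι' A I z' x') ∧
      (∀ φ ∈ dualL0 ι' A I z' x', ∃ ψ ∈ giL0 ι A I z x, f ψ = φ) ∧
      (∀ ψ ∈ giL0 ι A I z x, ∀ φ ∈ giL0 ι A I z x,
        qInner (f ψ) (f φ) = qInner ψ φ) ∧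
      (∀ α, ∀ ψ ∈ giL0 ι A I z x,
        f ((Zop (z α)).mulVec ψ) = (Zop (z' α)).mulVec (f ψ)) ∧
      (∀ i, ∀ ψ ∈ giL0 ι A I z x,
        f ((Xop (x i)).mulVec ψ) = (Xop (x' i)).mulVec (f ψ)) := by
  classical
  simp only [mem_giL0_iff, mem_dualL0_iff]
  set ζ := syndrome z
  set ζ' := syndrome z'
  set P := pullbackMatrix ζ (span (ZMod 2) (Set.range x))
  set P' := pullbackMatrix ζ' ((span (ZMod 2) (Set.range (ζ' ∘ x'))).comap ζ')
  have hx : ∀ i, ζ' (x' i) = ζ (x i) := fun i => funext fun α => (hdual α i).symm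
  have hgram : Pᴴ * P = P'ᴴ * P' := by
    rw [conjTranspose_pullbackMatrix_mul_self, conjTranspose_pullbackMatrix_mul_self,
      map_comap_eq_of_le (span_le.2 (Set.range_comp_subset_range _ _)),
      show ζ' ∘ x' = ζ ∘ x from funext hx, Set.range_comp, map_span]
  have hF : P' * Pᴴ * P = P' := by
    rw [Matrix.mul_assoc, hgram, pullbackMatrix_mul_conjTranspose_mul_self]
  have hX : ∀ i, Xop (x i) * P = P * Xop (ζ (x i)) := fun i =>
    Xop_mul_pullbackMatrix _ _ (subset_span ⟨i, rfl⟩)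
  have hX' : ∀ i, Xop (x' i) * P' = P' * Xop (ζ (x i)) := fun i => by
    rw [← hx]
    exact Xop_mul_pullbackMatrix _ _ (mem_comap.2 (subset_span ⟨i, rfl⟩))
  refine ⟨fun α _ => mulVec_mem_range_of_mul_eq (Zop_mul_pullbackMatrix_syndrome z _ α),
    fun i _ => mulVec_mem_range_of_mul_eq (hX i),
    fun α _ => mulVec_mem_range_of_mul_eq (Zop_mul_pullbackMatrix_syndrome z' _ α),
    fun i _ => mulVec_mem_range_of_mul_eq (hX' i), (P' * Pᴴ).mulVecLin, ?_, ?_, ?_, ?_, ?_⟩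
  · rintro _ ⟨g, rfl⟩
    exact ⟨g, by simp only [mulVecLin_apply, mulVec_mulVec, hF]⟩
  · rintro _ ⟨g, rfl⟩
    exact ⟨P *ᵥ g, ⟨g, rfl⟩, by simp only [mulVecLin_apply, mulVec_mulVec, hF]⟩
  · rintro _ ⟨g, rfl⟩ _ ⟨h, rfl⟩
    simp only [mulVecLin_apply, qInner_eq_dotProduct, mulVec_mulVec, hF,
      star_mulVec_dotProduct_mulVec, hgram]
  · rintro α _ ⟨g, rfl⟩
    exact mulVec_comm_of_intertwining hF (Zop_mul_pullbackMatrix_syndrome z _ α)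
      (Zop_mul_pullbackMatrix_syndrome z' _ α) g
  · rintro i _ ⟨g, rfl⟩
    exact mulVec_comm_of_intertwining hF (hX i) (hX' i) g
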